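/- arXiv:2302.08339 — 4 statements merged into one kernel-verified Lean document; each statement's English description precedes it below -/
import Mathlib

section
/- Let g be a real semisimple Lie algebra with Iwasawa decomposition g = k ⊕ a ⊕ n, t an abelian subspace of k centralizing a, and q a Lie subalgebra of t ⊕ a ⊕ n. Let λ be a positive restricted root. If the orthogonal projection of q onto a ⊕ n contains g_λ and contains a vector H ∈ a with λ(H) ≠ 0, then g_λ ⊆ q. -/
/-!
Let `T₀ + H ∈ q` with `T₀ ∈ t`. Bracketing it with `T + X ∈ q` (`X ∈ g_λ`) kills the `t`-parts,
because `t` is abelian and centralizes `a`, and leaves `(ad T₀ + λ(H)) X`. So `A = ad T₀ + λ(H)`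
maps `g_λ` into `q ∩ g_λ`. Since `ad T₀` is skew-adjoint for the positive definite form `⟨·,·⟩`,
`A X = 0` forces `λ(H) ⟨X, X⟩ = 0`, hence `X = 0`: `A` is injective, so by finite-dimensionality
it maps `g_λ` onto itself, and `g_λ = A(g_λ) ⊆ q`.
-/

/-- The inner product `⟨X,Y⟩ = -B(X, θY)` associated with a Cartan involution `θ`. -/
noncomputable def cip (L : Type*) [LieRing L] [LieAlgebra ℝ L]
    (θ : L →ₗ⁅ℝ⁆ L) (X Y : L) : ℝ :=
  -(killingForm ℝ L X (θ Y))

theorem injective_add_smul_id_of_skew {V : Type*} [AddCommGroup V] [Module ℝ V]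
    {B : LinearMap.BilinForm ℝ V} (hB : ∀ x, x ≠ 0 → 0 < B x x)
    {D : V →ₗ[ℝ] V} (hD : ∀ x, B (D x) x = -B x (D x)) {c : ℝ} (hc : c ≠ 0) :
    Function.Injective (D + c • (LinearMap.id : V →ₗ[ℝ] V)) := by
  rw [← LinearMap.ker_eq_bot, LinearMap.ker_eq_bot']
  intro x hx
  have hDx : D x = -(c • x) := eq_neg_of_add_eq_zero_left hx
  have hBxx : c * B x x = 0 := by
    have := hD x
    simp only [hDx, map_neg, map_smul, LinearMap.neg_apply, LinearMap.smul_apply,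
      smul_eq_mul, neg_neg] at this
    linarith
  by_contra hx0
  exact (hB x hx0).ne' ((mul_eq_zero.mp hBxx).resolve_left hc)

theorem Submodule.map_eq_self_of_injective {K V : Type*} [Field K] [AddCommGroup V] [Module K V]
    {p : Submodule K V} [FiniteDimensional K p] {f : V →ₗ[K] V} (hf : Function.Injective f)
    (hfp : p.map f ≤ p) : p.map f = p :=
  Submodule.eq_of_le_of_finrank_eq hfp (Submodule.equivMapOfInjective f hf p).finrank_eq.symm

noncomputable def cipForm (L : Type*) [LieRing L] [LieAlgebra ℝ L] (θ : L →ₗ⁅ℝ⁆ L) :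
    LinearMap.BilinForm ℝ L :=
  -(killingForm ℝ L).compl₂ (θ : L →ₗ[ℝ] L)

theorem lie_add_add_eq_of_commute {L : Type*} [LieRing L] [LieAlgebra ℝ L] {T₀ T H X : L}
    (hT₀T : ⁅T₀, T⁆ = 0) (hTH : ⁅T, H⁆ = 0) {c : ℝ} (hHX : ⁅H, X⁆ = c • X) :
    ⁅T₀ + H, T + X⁆ = ⁅T₀, X⁆ + c • X := by
  rw [add_lie, lie_add, lie_add, hT₀T, ← lie_skew H T, hTH, hHX, neg_zero, zero_add, zero_add]

theorem root_space_le_of_proj_general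
    (L : Type*) [LieRing L] [LieAlgebra ℝ L] [FiniteDimensional ℝ L]
    (θ : L →ₗ⁅ℝ⁆ L)
    (hpos : ∀ X : L, X ≠ 0 → 0 < cip L θ X X)
    (t a glam : Submodule ℝ L)
    (htab : ∀ T ∈ t, ∀ T' ∈ t, ⁅T, T'⁆ = 0)
    (hta : ∀ T ∈ t, ∀ H ∈ a, ⁅T, H⁆ = 0)
    (q : Submodule ℝ L)
    (hq : ∀ x ∈ q, ∀ y ∈ q, ⁅x, y⁆ ∈ q)
    (lam : L →ₗ[ℝ] ℝ)
    (hglam : ∀ X ∈ glam, ∀ H ∈ a, ⁅H, X⁆ = lam H • X)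
    (htglam : ∀ T ∈ t, ∀ X ∈ glam, ⁅T, X⁆ ∈ glam)
    -- `ad T` is skew-adjoint for `T ∈ t ⊆ k`
    (hskew : ∀ T ∈ t, ∀ X Y : L, cip L θ ⁅T, X⁆ Y = -(cip L θ X ⁅T, Y⁆))
    (hproj : ∀ X ∈ glam, ∃ T ∈ t, T + X ∈ q)
    (H : L) (hHa : H ∈ a) (hlamH : lam H ≠ 0)
    (hHproj : ∃ T ∈ t, T + H ∈ q) :
    glam ≤ q := by
  obtain ⟨T₀, hT₀, hT₀H⟩ := hHproj
  set A : L →ₗ[ℝ] L := LieAlgebra.ad ℝ L T₀ + lam H • LinearMap.id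
  have hA_apply (X : L) : A X = ⁅T₀, X⁆ + lam H • X := rfl
  have hA_glam : glam.map A ≤ glam := by
    rintro _ ⟨X, hX, rfl⟩
    exact glam.add_mem (htglam T₀ hT₀ X hX) (glam.smul_mem _ hX)
  have hA_q : glam.map A ≤ q := by
    rintro _ ⟨X, hX, rfl⟩
    obtain ⟨T, hT, hTX⟩ := hproj X hX
    rw [hA_apply, ← lie_add_add_eq_of_commute (htab T₀ hT₀ T hT) (hta T hT H hHa)
      (hglam X hX H hHa)]
    exact hq _ hT₀H _ hTX
  have hA_inj : Function.Injective A :=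
    injective_add_smul_id_of_skew (B := cipForm L θ) hpos (fun X => hskew T₀ hT₀ X X) hlamH
  calc glam = glam.map A := (Submodule.map_eq_self_of_injective hA_inj hA_glam).symm
    _ ≤ q := hA_q

/-- Let `q ⊆ t ⊕ a ⊕ n` be a Lie subalgebra, where `t ⊆ k₀` is abelian and centralizes `a`,
and let `λ` be a positive restricted root.  If the orthogonal projection of `q` onto
`a ⊕ n` contains the root space `g_λ` (i.e. each `X ∈ g_λ` has some `T ∈ t` with
`T + X ∈ q`) and contains a vector `H ∈ a` with `λ(H) ≠ 0`, then `g_λ ⊆ q`. -/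
theorem root_space_le_of_proj
    (L : Type*) [LieRing L] [LieAlgebra ℝ L] [FiniteDimensional ℝ L]
    [LieAlgebra.IsSemisimple ℝ L]
    (θ : L →ₗ⁅ℝ⁆ L) (hθ : Function.Involutive θ)
    (hpos : ∀ X : L, X ≠ 0 → 0 < cip L θ X X)
    (t a n glam : Submodule ℝ L)
    (htab : ∀ T ∈ t, ∀ T' ∈ t, ⁅T, T'⁆ = 0)
    (hta : ∀ T ∈ t, ∀ H ∈ a, ⁅T, H⁆ = 0)
    (hglamn : glam ≤ n)
    (q : Submodule ℝ L)
    (hq : ∀ x ∈ q, ∀ y ∈ q, ⁅x, y⁆ ∈ q)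
    (hqsub : q ≤ t ⊔ a ⊔ n)
    (lam : L →ₗ[ℝ] ℝ)
    (hglam : ∀ X ∈ glam, ∀ H ∈ a, ⁅H, X⁆ = lam H • X)
    (htglam : ∀ T ∈ t, ∀ X ∈ glam, ⁅T, X⁆ ∈ glam)
    -- `ad T` is skew-adjoint for `T ∈ t ⊆ k`
    (hskew : ∀ T ∈ t, ∀ X Y : L, cip L θ ⁅T, X⁆ Y = -(cip L θ X ⁅T, Y⁆))
    (hproj : ∀ X ∈ glam, ∃ T ∈ t, T + X ∈ q)
    (H : L) (hHa : H ∈ a) (hlamH : lam H ≠ 0)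
    (hHproj : ∃ T ∈ t, T + H ∈ q) :
    glam ≤ q :=
  root_space_le_of_proj_general L θ hpos t a glam htab hta q hq lam hglam htglam hskew hproj H hHa
    hlamH hHproj
end

section
/- Let g be a real semisimple Lie algebra with Cartan involution θ and restricted root spaces with respect to a maximal abelian a ⊆ p. Let α be a simple root and ξ ∈ g_α nonzero. Then for g = Exp(-ξ/|ξ|²) (so Ad(g) = e^{-ad(ξ)/|ξ|²}), one has Ad(g⁻¹)*(H_α + ξ) = e^{-ad(θξ)/|ξ|²}(H_α + ξ) = ξ - (|α|²/(2|ξ|²)) θξ. In particular, any subspace of k_0 ⊕ a ⊕ n orthogonal to H_α + ξ is mapped by Ad(g) into a subspace of k_0 ⊕ a ⊕ n orthogonal to ξ. -/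
/-- `E` is the exponential `e^f` of the endomorphism `f`. -/
def IsExpOf (L : Type*) [LieRing L] [LieAlgebra ℝ L] [TopologicalSpace L]
    (f E : Module.End ℝ L) : Prop :=
  ∀ Y : L, Filter.Tendsto
    (fun N : ℕ => ∑ k ∈ Finset.range N, ((k.factorial : ℝ)⁻¹ • (f ^ k)) Y)
    Filter.atTop (nhds (E Y))

/-!
`ad(θξ)` is nilpotent of order three on `H_α + ξ`: it sends `H_α ↦ |α|² θξ`, `ξ ↦ |ξ|² H_α`
and kills `θξ`. Hence the exponential series of `-ad(θξ)/|ξ|²` at `H_α + ξ` stops after its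
quadratic term, which gives the formula for `Ad(g⁻¹)* (H_α + ξ)`. The orthogonality statement
follows by pairing with it: `⟨Ad(g) x, ξ⟩` differs from `⟨x, H_α + ξ⟩` by a multiple of
`⟨Ad(g) x, θξ⟩`, which vanishes on `k₀ ⊕ a ⊕ n`.
-/

open Finset LieAlgebra

theorem IsExpOf.apply_eq_sum_of_pow_apply_eq_zero {L : Type*} [LieRing L] [LieAlgebra ℝ L]
    [TopologicalSpace L] [T2Space L] {f E : Module.End ℝ L} (hE : IsExpOf L f E) {v : L}
    {n : ℕ} (hv : (f ^ n) v = 0) :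
    E v = ∑ k ∈ range n, ((k.factorial : ℝ)⁻¹ • f ^ k) v := by
  refine tendsto_nhds_unique (hE v) (tendsto_atTop_of_eventually_const (i₀ := n) fun N hN => ?_)
  refine (sum_subset (range_subset_range.2 hN) fun k _ hk => ?_).symm
  rw [LinearMap.smul_apply, ← pow_sub_mul_pow f (not_lt.1 (mem_range.not.1 hk)),
    Module.End.mul_apply, hv, map_zero, smul_zero]

section

variable {K L : Type*} [Field K] [LieRing L] [LieAlgebra K L] {y h x : L} {b c : K}

theorem ad_pow_three_apply_add_eq_zero (hyh : ⁅y, h⁆ = b • y) (hyx : ⁅y, x⁆ = c • h) :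
    (ad K L y ^ 3) (h + x) = 0 := by
  simp [pow_succ, Module.End.mul_apply, hyh, hyx]

theorem sum_range_three_smul_pow_ad_apply_add [CharZero K] (hyh : ⁅y, h⁆ = b • y)
    (hyx : ⁅y, x⁆ = c • h) (hc : c ≠ 0) :
    ∑ k ∈ range 3, ((k.factorial : K)⁻¹ • ((-c⁻¹) • ad K L y) ^ k) (h + x) =
      x - (b / (2 * c)) • y := by
  set f := (-c⁻¹) • ad K L y
  have hf₁ : f (h + x) = -(c⁻¹ * b) • y - h := by
    simp only [f, LinearMap.smul_apply, ad_apply, lie_add, hyh, hyx, smul_add, smul_smul,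
      neg_mul, inv_mul_cancel₀ hc]
    module
  have hf₂ : f (-(c⁻¹ * b) • y - h) = (c⁻¹ * b) • y := by
    simp only [f, LinearMap.smul_apply, ad_apply, lie_sub, lie_smul, lie_self, hyh,
      smul_sub, smul_smul]
    module
  rw [sum_range_succ, sum_range_succ, sum_range_one]
  simp only [LinearMap.smul_apply, pow_zero, pow_one, sq, Module.End.one_apply,
    Module.End.mul_apply, hf₁, hf₂, Nat.factorial_zero, Nat.factorial_one, Nat.factorial_two,
    Nat.cast_one, Nat.cast_ofNat, inv_one, one_smul]
  match_scalars <;> field_simp <;> ring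

end

theorem cip_sub_smul_right (L : Type*) [LieRing L] [LieAlgebra ℝ L] (θ : L →ₗ⁅ℝ⁆ L)
    (x y z : L) (t : ℝ) : cip L θ x (y - t • z) = cip L θ x y - t * cip L θ x z := by
  simp only [cip, map_sub, map_smul, smul_eq_mul]
  ring

theorem conjugate_normal_vector_general
    (L : Type*) [LieRing L] [LieAlgebra ℝ L]
    [TopologicalSpace L] [T2Space L]
    (θ : L →ₗ⁅ℝ⁆ L)
    (hpos : ∀ X : L, X ≠ 0 → 0 < cip L θ X X)
    (k0 a n : Submodule ℝ L)
    (Hα ξ : L) (hξ0 : ξ ≠ 0)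
    -- `[θξ, H_α] = |α|² θξ` (root relation for `θξ ∈ g_{-α}`)
    (h1 : ⁅θ ξ, Hα⁆ = cip L θ Hα Hα • θ ξ)
    -- `[θξ, ξ] = |ξ|² H_α`
    (h2 : ⁅θ ξ, ξ⁆ = cip L θ ξ ξ • Hα)
    (E' : Module.End ℝ L)
    (hE' : IsExpOf L ((-(cip L θ ξ ξ)⁻¹) • LieAlgebra.ad ℝ L (θ ξ)) E')
    (Eg : Module.End ℝ L)
    -- `Ad(g)` preserves `k₀ ⊕ a ⊕ n`
    (hpres : ∀ x ∈ k0 ⊔ a ⊔ n, Eg x ∈ k0 ⊔ a ⊔ n)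
    -- `⟨Ad(g) x, Ad(g⁻¹)* y⟩ = ⟨x, y⟩`
    (hinv : ∀ x y : L, cip L θ (Eg x) (E' y) = cip L θ x y)
    -- `k₀ ⊕ a ⊕ n` is orthogonal to `θξ ∈ θn`
    (horthθ : ∀ x ∈ k0 ⊔ a ⊔ n, cip L θ x (θ ξ) = 0) :
    E' (Hα + ξ) = ξ - (cip L θ Hα Hα / (2 * cip L θ ξ ξ)) • θ ξ ∧
    (∀ x ∈ k0 ⊔ a ⊔ n, cip L θ x (Hα + ξ) = 0 →
      Eg x ∈ k0 ⊔ a ⊔ n ∧ cip L θ (Eg x) ξ = 0) := by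
  have hc : cip L θ ξ ξ ≠ 0 := (hpos ξ hξ0).ne'
  have hE : E' (Hα + ξ) = ξ - (cip L θ Hα Hα / (2 * cip L θ ξ ξ)) • θ ξ := by
    rw [hE'.apply_eq_sum_of_pow_apply_eq_zero (n := 3) (by
      rw [smul_pow, LinearMap.smul_apply, ad_pow_three_apply_add_eq_zero h1 h2, smul_zero]),
      sum_range_three_smul_pow_ad_apply_add h1 h2 hc]
  refine ⟨hE, fun x hx hxo => ⟨hpres x hx, ?_⟩⟩
  have hpair := hinv x (Hα + ξ)
  rwa [hE, cip_sub_smul_right, horthθ _ (hpres x hx), hxo, mul_zero, sub_zero] at hpair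

/-- For a simple root `α` and nonzero `ξ ∈ g_α`, with `g = Exp(-ξ/|ξ|²)` one has
`Ad(g⁻¹)* (H_α + ξ) = e^{-ad(θξ)/|ξ|²}(H_α + ξ) = ξ - (|α|²/(2|ξ|²)) θξ`.  In particular
any subspace of `k₀ ⊕ a ⊕ n` orthogonal to `H_α + ξ` is mapped by `Ad(g)` into a subspace
of `k₀ ⊕ a ⊕ n` orthogonal to `ξ`. -/
theorem conjugate_normal_vector
    (L : Type*) [LieRing L] [LieAlgebra ℝ L] [FiniteDimensional ℝ L]
    [LieAlgebra.IsSemisimple ℝ L]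
    [TopologicalSpace L] [IsTopologicalAddGroup L] [ContinuousSMul ℝ L] [T2Space L]
    (θ : L →ₗ⁅ℝ⁆ L) (hθ : Function.Involutive θ)
    (hpos : ∀ X : L, X ≠ 0 → 0 < cip L θ X X)
    (k0 a n : Submodule ℝ L)
    (Hα ξ : L) (hHα : Hα ∈ a) (hξn : ξ ∈ n) (hξ0 : ξ ≠ 0)
    -- `[θξ, H_α] = |α|² θξ` (root relation for `θξ ∈ g_{-α}`)
    (h1 : ⁅θ ξ, Hα⁆ = cip L θ Hα Hα • θ ξ)
    -- `[θξ, ξ] = |ξ|² H_α`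
    (h2 : ⁅θ ξ, ξ⁆ = cip L θ ξ ξ • Hα)
    (E' : Module.End ℝ L)
    (hE' : IsExpOf L ((-(cip L θ ξ ξ)⁻¹) • LieAlgebra.ad ℝ L (θ ξ)) E')
    (Eg : Module.End ℝ L)
    (hEg : IsExpOf L ((-(cip L θ ξ ξ)⁻¹) • LieAlgebra.ad ℝ L ξ) Eg)
    -- `Ad(g)` preserves `k₀ ⊕ a ⊕ n`
    (hpres : ∀ x ∈ k0 ⊔ a ⊔ n, Eg x ∈ k0 ⊔ a ⊔ n)
    -- `⟨Ad(g) x, Ad(g⁻¹)* y⟩ = ⟨x, y⟩`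
    (hinv : ∀ x y : L, cip L θ (Eg x) (E' y) = cip L θ x y)
    -- `k₀ ⊕ a ⊕ n` is orthogonal to `θξ ∈ θn`
    (horthθ : ∀ x ∈ k0 ⊔ a ⊔ n, cip L θ x (θ ξ) = 0) :
    E' (Hα + ξ) = ξ - (cip L θ Hα Hα / (2 * cip L θ ξ ξ)) • θ ξ ∧
    (∀ x ∈ k0 ⊔ a ⊔ n, cip L θ x (Hα + ξ) = 0 →
      Eg x ∈ k0 ⊔ a ⊔ n ∧ cip L θ (Eg x) ξ = 0) :=
  conjugate_normal_vector_general L θ hpos k0 a n Hα ξ hξ0 h1 h2 E' hE' Eg hpres hinv horthθ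
end

section
/- Let AN be a solvable Lie group with Lie algebra a ⊕ n arising from an Iwasawa decomposition of a real semisimple Lie algebra g, equipped with the left-invariant metric ⟨X,Y⟩_{AN} = ⟨X_a,Y_a⟩ + (1/2)⟨X_n,Y_n⟩. Then the Levi-Civita connection satisfies, for left-invariant vector fields X, Y, Z ∈ a ⊕ n: 4⟨∇_X Y, Z⟩_{AN} = ⟨[X,Y] + (1-θ)[θX,Y], Z⟩. Consequently, the second fundamental form II of a Lie subgroup S ⊆ AN with Lie algebra s at the identity satisfies ⟨II(X,X), η⟩_{AN} = (1/4)⟨(1-θ)[θX,X], η⟩ for X ∈ s and η ∈ s^⊥. -/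
/-- The left-invariant metric of `AN`: `⟨X,Y⟩_{AN} = ⟨X_a,Y_a⟩ + (1/2)⟨X_n,Y_n⟩`,
where `Pa`, `Pn` are the projections onto the `a`- and `n`-components. -/
noncomputable def cipAN (L : Type*) [LieRing L] [LieAlgebra ℝ L]
    (θ : L →ₗ⁅ℝ⁆ L) (Pa Pn : L →ₗ[ℝ] L) (X Y : L) : ℝ :=
  cip L θ (Pa X) (Pa Y) + (1 / 2) * cip L θ (Pn X) (Pn Y)

/-- For the solvable part `AN` of an Iwasawa decomposition with the left-invariant metric
`⟨X,Y⟩_{AN} = ⟨X_a,Y_a⟩ + (1/2)⟨X_n,Y_n⟩`, the Levi-Civita connection (characterized by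
the Koszul formula on left-invariant fields) satisfies
`4⟨∇_X Y, Z⟩_{AN} = ⟨[X,Y] + (1-θ)[θX,Y], Z⟩`; consequently the second fundamental form
of a Lie subgroup `S ⊆ AN` with Lie algebra `s` satisfies
`⟨II(X,X), η⟩_{AN} = (1/4)⟨(1-θ)[θX,X], η⟩` for `X ∈ s` and `η ⊥ s`. -/
theorem AN_levi_civita_and_second_fundamental_form
    (L : Type*) [LieRing L] [LieAlgebra ℝ L] [FiniteDimensional ℝ L]
    [LieAlgebra.IsSemisimple ℝ L]
    (θ : L →ₗ⁅ℝ⁆ L) (hθ : Function.Involutive θ)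
    (hpos : ∀ X : L, X ≠ 0 → 0 < cip L θ X X)
    (a n : Submodule ℝ L)
    (hap : ∀ H ∈ a, θ H = -H)
    (habelian : ∀ H ∈ a, ∀ H' ∈ a, ⁅H, H'⁆ = 0)
    (hnn : ∀ X ∈ n, ∀ Y ∈ n, ⁅X, Y⁆ ∈ n)
    (han : ∀ H ∈ a, ∀ X ∈ n, ⁅H, X⁆ ∈ n)
    -- `⟨[X,Y],Z⟩ = -⟨Y,[θX,Z]⟩`
    (hadj : ∀ X Y Z : L, cip L θ ⁅X, Y⁆ Z = -(cip L θ Y ⁅θ X, Z⁆))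
    -- `a ⊥ n` and the Killing form vanishes on `n`
    (horth : ∀ H ∈ a, ∀ X ∈ n, cip L θ H X = 0)
    (hBnn : ∀ X ∈ n, ∀ Y ∈ n, killingForm ℝ L X Y = 0)
    (hsymm : ∀ X Y : L, cip L θ X Y = cip L θ Y X)
    -- the projections onto the `a`- and `n`-components
    (Pa Pn : L →ₗ[ℝ] L)
    (hPaa : ∀ x ∈ a, Pa x = x ∧ Pn x = 0)
    (hPnn : ∀ x ∈ n, Pn x = x ∧ Pa x = 0)
    (hPmem : ∀ x : L, Pa x ∈ a ∧ Pn x ∈ n)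
    -- the Levi-Civita connection via the Koszul formula for left-invariant fields
    (nabla : L → L → L)
    (hKoszul : ∀ X ∈ a ⊔ n, ∀ Y ∈ a ⊔ n, ∀ Z ∈ a ⊔ n,
      2 * cipAN L θ Pa Pn (nabla X Y) Z =
        cipAN L θ Pa Pn ⁅X, Y⁆ Z - cipAN L θ Pa Pn ⁅Y, Z⁆ X +
          cipAN L θ Pa Pn ⁅Z, X⁆ Y)
    (hnabla : ∀ X Y : L, nabla X Y ∈ a ⊔ n) :
    (∀ X ∈ a ⊔ n, ∀ Y ∈ a ⊔ n, ∀ Z ∈ a ⊔ n,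
      4 * cipAN L θ Pa Pn (nabla X Y) Z =
        cip L θ (⁅X, Y⁆ + (⁅θ X, Y⁆ - θ ⁅θ X, Y⁆)) Z) ∧
    (∀ s : Submodule ℝ L, s ≤ a ⊔ n → (∀ x ∈ s, ∀ y ∈ s, ⁅x, y⁆ ∈ s) →
      ∀ X ∈ s, ∀ η ∈ a ⊔ n, (∀ W ∈ s, cipAN L θ Pa Pn η W = 0) →
        cipAN L θ Pa Pn (nabla X X) η =
          (1 / 4) * cip L θ (⁅θ X, X⁆ - θ ⁅θ X, X⁆) η) := by
  -- basic (bi)linearity facts for `cip`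
  have cadd1 : ∀ U V W : L, cip L θ (U + V) W = cip L θ U W + cip L θ V W := by
    intro U V W; simp [cip]; ring
  have csub1 : ∀ U V W : L, cip L θ (U - V) W = cip L θ U W - cip L θ V W := by
    intro U V W; simp [cip]; ring
  have cadd2 : ∀ U V W : L, cip L θ U (V + W) = cip L θ U V + cip L θ U W := by
    intro U V W; simp [cip]; ring
  have cneg2 : ∀ U V : L, cip L θ U (-V) = -(cip L θ U V) := by
    intro U V; simp [cip]
  -- symmetry of the Killing form
  have hBsymm : ∀ U V : L, killingForm ℝ L U V = killingForm ℝ L V U := fun U V =>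
    LieModule.traceForm_comm ℝ L L U V
  -- θ is self-adjoint with respect to cip
  have hself : ∀ U V : L, cip L θ (θ U) V = cip L θ U (θ V) := by
    intro U V
    rw [hsymm]
    show -(killingForm ℝ L V (θ (θ U))) = -(killingForm ℝ L U (θ (θ V)))
    rw [hθ U, hθ V, hBsymm]
  -- key adjointness identities
  have hA : ∀ X Y Z : L, cip L θ ⁅θ X, Y⁆ Z = cip L θ ⁅Z, X⁆ Y := by
    intro X Y Z
    rw [hadj, hθ X, hsymm ⁅Z, X⁆ Y, ← lie_skew X Z, cneg2, neg_neg]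
  have hB : ∀ X Y Z : L, cip L θ (θ ⁅θ X, Y⁆) Z = cip L θ ⁅Y, Z⁆ X := by
    intro X Y Z
    calc cip L θ (θ ⁅θ X, Y⁆) Z
        = cip L θ ⁅θ X, Y⁆ (θ Z) := hself _ _
      _ = -(cip L θ Y ⁅θ (θ X), θ Z⁆) := hadj _ _ _
      _ = -(cip L θ Y ⁅X, θ Z⁆) := by rw [hθ X]
      _ = -(cip L θ Y (-⁅θ Z, X⁆)) := by rw [lie_skew]
      _ = cip L θ Y ⁅θ Z, X⁆ := by rw [cneg2, neg_neg]
      _ = cip L θ ⁅θ Z, X⁆ Y := hsymm _ _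
      _ = -(cip L θ X ⁅θ (θ Z), Y⁆) := hadj _ _ _
      _ = -(cip L θ X ⁅Z, Y⁆) := by rw [hθ Z]
      _ = -(cip L θ X (-⁅Y, Z⁆)) := by rw [lie_skew]
      _ = cip L θ X ⁅Y, Z⁆ := by rw [cneg2, neg_neg]
      _ = cip L θ ⁅Y, Z⁆ X := hsymm _ _
  -- brackets of elements of a ⊔ n lie in n
  have hbrkt : ∀ X ∈ a ⊔ n, ∀ Y ∈ a ⊔ n, ⁅X, Y⁆ ∈ n := by
    intro X hX Y hY
    obtain ⟨xa, hxa, xn, hxn, rfl⟩ := Submodule.mem_sup.mp hX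
    obtain ⟨ya, hya, yn, hyn, rfl⟩ := Submodule.mem_sup.mp hY
    have h1 : ⁅xa, ya⁆ ∈ n := by rw [habelian xa hxa ya hya]; exact n.zero_mem
    have h2 : ⁅xa, yn⁆ ∈ n := han xa hxa yn hyn
    have h3 : ⁅xn, ya⁆ ∈ n := by
      rw [← lie_skew]; exact n.neg_mem (han ya hya xn hxn)
    have h4 : ⁅xn, yn⁆ ∈ n := hnn xn hxn yn hyn
    have : ⁅xa + xn, ya + yn⁆ = ⁅xa, ya⁆ + ⁅xa, yn⁆ + (⁅xn, ya⁆ + ⁅xn, yn⁆) := by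
      rw [add_lie, lie_add, lie_add]
    rw [this]
    exact n.add_mem (n.add_mem h1 h2) (n.add_mem h3 h4)
  -- decomposition identity on a ⊔ n
  have hdecomp : ∀ V ∈ a ⊔ n, Pa V + Pn V = V := by
    intro V hV
    obtain ⟨va, hva, vn, hvn, rfl⟩ := Submodule.mem_sup.mp hV
    rw [map_add, map_add, (hPaa va hva).1, (hPnn vn hvn).2, (hPaa va hva).2,
      (hPnn vn hvn).1]
    abel
  -- for U ∈ n and V ∈ a ⊔ n, cipAN U V = (1/2) cip U V
  have hANn : ∀ U ∈ n, ∀ V ∈ a ⊔ n, cipAN L θ Pa Pn U V = (1 / 2) * cip L θ U V := by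
    intro U hU V hV
    unfold cipAN
    rw [(hPnn U hU).1, (hPnn U hU).2]
    have h0 : cip L θ 0 (Pa V) = 0 := by simp [cip]
    rw [h0, zero_add]
    congr 1
    have hsum := cadd2 U (Pa V) (Pn V)
    rw [hdecomp V hV] at hsum
    have hUa : cip L θ U (Pa V) = 0 := by
      rw [hsymm]; exact horth (Pa V) (hPmem V).1 U hU
    rw [hsum, hUa, zero_add]
  -- main Levi-Civita formula
  have hmain : ∀ X ∈ a ⊔ n, ∀ Y ∈ a ⊔ n, ∀ Z ∈ a ⊔ n,
      4 * cipAN L θ Pa Pn (nabla X Y) Z =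
        cip L θ (⁅X, Y⁆ + (⁅θ X, Y⁆ - θ ⁅θ X, Y⁆)) Z := by
    intro X hX Y hY Z hZ
    have hK := hKoszul X hX Y hY Z hZ
    rw [hANn _ (hbrkt X hX Y hY) Z hZ, hANn _ (hbrkt Y hY Z hZ) X hX,
      hANn _ (hbrkt Z hZ X hX) Y hY] at hK
    rw [cadd1, csub1, hA X Y Z, hB X Y Z]
    linarith
  refine ⟨hmain, ?_⟩
  intro s hs _ X hXs η hη _
  have hX : X ∈ a ⊔ n := hs hXs
  have h1 := hmain X hX X hX η hη
  rw [lie_self, zero_add] at h1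
  linarith
end

section
/- Let g be a real semisimple Lie algebra with Iwasawa data, α a simple root, and suppose ξ = aH_α + (1-θ)ξ_α and η = (1-θ)η_α span a two-dimensional Lie triple system V ⊆ p with a ≠ 0 and ξ_α, η_α ∈ g_α, η_α ≠ 0. If additionally ad(ξ)²η is proportional to η and [ξ,η], [η,[η,ξ]] are orthogonal to g_{2α}, then [ξ_α, η_α] = 0. -/
/-!
Write `λ = α(H_α)` and `B = [ξ_α, η_α]`, an `ad H_α`-eigenvector of weight `2λ`. Pair `ad(ξ)²η`
with `B`. On one side `ad(ξ)²η = Cη`, and `η` only has weights `±λ`, so the pairing is `0`.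
On the other side `θξ = -ξ` makes `ad ξ` symmetric, so the pairing is `⟨[ξ,η],[ξ,B]⟩`; expanding
into weight vectors, only `⟨B, [aH_α, B]⟩ = 2aλ|B|²` and
`-⟨[aH_α, η_α], [θξ_α, B]⟩ = aλ⟨[ξ_α, η_α], B⟩ = aλ|B|²` survive. Hence `3aλ|B|² = 0`.
-/

section Eigenvector

variable {R L : Type*} [CommRing R] [LieRing L] [LieAlgebra R L] {H X Y : L} {b c : R}

lemma lie_lie_eq_add_smul (hX : ⁅H, X⁆ = b • X) (hY : ⁅H, Y⁆ = c • Y) :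
    ⁅H, ⁅X, Y⁆⁆ = (b + c) • ⁅X, Y⁆ := by
  rw [leibniz_lie, hX, hY, smul_lie, lie_smul, add_smul]

lemma lie_map_eq_neg_smul (θ : L →ₗ⁅R⁆ L) (hH : θ H = -H) (hX : ⁅H, X⁆ = b • X) :
    ⁅H, θ X⁆ = (-b) • θ X := by
  have h := θ.map_lie H X
  rw [hX, hH, neg_lie, map_smul] at h
  rw [neg_smul, h, neg_neg]

end Eigenvector

section InnerProduct

variable {L : Type*} [LieRing L] [LieAlgebra ℝ L] (θ : L →ₗ⁅ℝ⁆ L) (X X' Y Y' : L) (c : ℝ)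

@[simp] lemma cip_add_left : cip L θ (X + X') Y = cip L θ X Y + cip L θ X' Y := by
  simp [cip]; ring

@[simp] lemma cip_sub_left : cip L θ (X - X') Y = cip L θ X Y - cip L θ X' Y := by
  simp [cip]; ring

@[simp] lemma cip_smul_left : cip L θ (c • X) Y = c * cip L θ X Y := by
  simp [cip]

@[simp] lemma cip_add_right : cip L θ X (Y + Y') = cip L θ X Y + cip L θ X Y' := by
  simp [cip]; ring

@[simp] lemma cip_sub_right : cip L θ X (Y - Y') = cip L θ X Y - cip L θ X Y' := by
  simp [cip]; ring

@[simp] lemma cip_smul_right : cip L θ X (c • Y) = c * cip L θ X Y := by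
  simp [cip]

variable {θ X Y}

lemma cip_lie_left_eq_cip_lie_right
    (hadj : ∀ X Y Z : L, cip L θ ⁅X, Y⁆ Z = -(cip L θ Y ⁅θ X, Z⁆))
    (hX : θ X = -X) (Y Z : L) : cip L θ ⁅X, Y⁆ Z = cip L θ Y ⁅X, Z⁆ := by
  rw [hadj, hX, neg_lie, cip, cip, map_neg, map_neg, neg_neg]

lemma cip_eq_zero_of_lie_eq_smul {H : L} {b c : ℝ}
    (hsymm : ∀ Y Z : L, cip L θ ⁅H, Y⁆ Z = cip L θ Y ⁅H, Z⁆)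
    (hX : ⁅H, X⁆ = b • X) (hY : ⁅H, Y⁆ = c • Y) (hbc : b ≠ c) : cip L θ X Y = 0 := by
  have h := hsymm X Y
  rw [hX, hY, cip_smul_left, cip_smul_right] at h
  exact (mul_eq_zero.mp (by linear_combination h : (b - c) * cip L θ X Y = 0)).resolve_left
    (sub_ne_zero.mpr hbc)

end InnerProduct

section RootVectors

variable {L : Type*} [LieRing L] [LieAlgebra ℝ L] {θ : L →ₗ⁅ℝ⁆ L}
  (hadj : ∀ X Y Z : L, cip L θ ⁅X, Y⁆ Z = -(cip L θ Y ⁅θ X, Z⁆))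
  {H ξα ηα : L} {lam : ℝ} (hH : θ H = -H) (hlam : 0 < lam)
  (hξ : ⁅H, ξα⁆ = lam • ξα) (hη : ⁅H, ηα⁆ = lam • ηα)
include hadj hH hlam hξ hη

lemma cip_lie_lie_eq_three_mul_cip (a : ℝ) :
    cip L θ ⁅a • H + (ξα - θ ξα), ηα - θ ηα⁆ ⁅a • H + (ξα - θ ξα), ⁅ξα, ηα⁆⁆ =
      3 * a * lam * cip L θ ⁅ξα, ηα⁆ ⁅ξα, ηα⁆ := by
  have hsymm := cip_lie_left_eq_cip_lie_right hadj hH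
  have orth {X Y : L} {b c : ℝ} (hX : ⁅H, X⁆ = b • X) (hY : ⁅H, Y⁆ = c • Y) (hbc : b ≠ c) :=
    cip_eq_zero_of_lie_eq_smul hsymm hX hY hbc
  have hθξ := lie_map_eq_neg_smul θ hH hξ
  have hθη := lie_map_eq_neg_smul θ hH hη
  have hB := lie_lie_eq_add_smul hξ hη
  have hM1 := lie_lie_eq_add_smul hξ hθη
  have hM2 := lie_lie_eq_add_smul hθξ hη
  have hθB := lie_lie_eq_add_smul hθξ hθη
  have hP := lie_lie_eq_add_smul hξ hB
  have hQ := lie_lie_eq_add_smul hθξ hB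
  have hηQ : cip L θ ηα ⁅θ ξα, ⁅ξα, ηα⁆⁆ = -cip L θ ⁅ξα, ηα⁆ ⁅ξα, ηα⁆ := by
    rw [hadj, neg_neg]
  simp only [add_lie, sub_lie, lie_sub, smul_lie, hη, hθη, hB, cip_add_left, cip_sub_left,
    cip_smul_left, cip_add_right, cip_sub_right, cip_smul_right]
  -- every other pairing is between different `ad H`-weights
  rw [orth hη hB ?_, orth hη hP ?_, orth hθη hB ?_, orth hθη hP ?_, orth hθη hQ ?_,
    orth hB hP ?_, orth hB hQ ?_, orth hM1 hB ?_, orth hM1 hP ?_, orth hM1 hQ ?_,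
    orth hM2 hB ?_, orth hM2 hP ?_, orth hM2 hQ ?_, orth hθB hB ?_, orth hθB hP ?_,
    orth hθB hQ ?_, hηQ]
  · ring
  all_goals intro h; linarith

lemma cip_sub_theta_lie_eq_zero : cip L θ (ηα - θ ηα) ⁅ξα, ηα⁆ = 0 := by
  have orth {X : L} {b : ℝ} (hX : ⁅H, X⁆ = b • X) (hb : b ≠ lam + lam) :=
    cip_eq_zero_of_lie_eq_smul (cip_lie_left_eq_cip_lie_right hadj hH) hX
      (lie_lie_eq_add_smul hξ hη) hb
  rw [cip_sub_left, orth hη (by intro h; linarith),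
    orth (lie_map_eq_neg_smul θ hH hη) (by intro h; linarith), sub_zero]

end RootVectors

theorem bracket_xi_eta_eq_zero_general
    (L : Type*) [LieRing L] [LieAlgebra ℝ L]
    (θ : L →ₗ⁅ℝ⁆ L) (hθ : Function.Involutive θ)
    (hpos : ∀ X : L, X ≠ 0 → 0 < cip L θ X X)
    (a : Submodule ℝ L)
    (hap : ∀ H ∈ a, θ H = -H)
    (αl : L →ₗ[ℝ] ℝ) (Hα : L) (hHα : Hα ∈ a)
    (hdualα : ∀ H ∈ a, cip L θ Hα H = αl H)
    (hαsq : 0 < cip L θ Hα Hα)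
    (aa : ℝ) (haa : aa ≠ 0)
    (ξα ηα : L)
    (hξroot : ∀ H ∈ a, ⁅H, ξα⁆ = αl H • ξα)
    (hηroot : ∀ H ∈ a, ⁅H, ηα⁆ = αl H • ηα)
    -- `ad` adjointness: `⟨[X,Y],Z⟩ = -⟨Y,[θX,Z]⟩`
    (hadj : ∀ X Y Z : L, cip L θ ⁅X, Y⁆ Z = -(cip L θ Y ⁅θ X, Z⁆))
    -- the two vectors spanning the Lie triple system
    (ξv ηv : L)
    (hξv : ξv = aa • Hα + (ξα - θ ξα))
    (hηv : ηv = ηα - θ ηα)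
    -- `ad(ξ)²η` is proportional to `η` (constant curvature of the section)
    (hprop : ∃ C : ℝ, ⁅ξv, ⁅ξv, ηv⁆⁆ = C • ηv) :
    ⁅ξα, ηα⁆ = 0 := by
  obtain ⟨C, hC⟩ := hprop
  have hH := hap Hα hHα
  have hlam : 0 < αl Hα := hdualα Hα hHα ▸ hαsq
  have hξ := hξroot Hα hHα
  have hη := hηroot Hα hHα
  have hθξv : θ ξv = -ξv := by
    rw [hξv, map_add, map_sub, map_smul, hH, hθ ξα]
    module
  have hnorm : 3 * aa * αl Hα * cip L θ ⁅ξα, ηα⁆ ⁅ξα, ηα⁆ = 0 :=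
    calc 3 * aa * αl Hα * cip L θ ⁅ξα, ηα⁆ ⁅ξα, ηα⁆
        = cip L θ ⁅ξv, ηv⁆ ⁅ξv, ⁅ξα, ηα⁆⁆ := by
          rw [hξv, hηv, cip_lie_lie_eq_three_mul_cip hadj hH hlam hξ hη]
      _ = cip L θ ⁅ξv, ⁅ξv, ηv⁆⁆ ⁅ξα, ηα⁆ := (cip_lie_left_eq_cip_lie_right hadj hθξv _ _).symm
      _ = 0 := by
          rw [hC, hηv, cip_smul_left, cip_sub_theta_lie_eq_zero hadj hH hlam hξ hη, mul_zero]
  by_contra hne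
  exact (hpos _ hne).ne' <| (mul_eq_zero.mp hnorm).resolve_left <|
    mul_ne_zero (mul_ne_zero three_ne_zero haa) hlam.ne'

/-- Suppose `ξ = aH_α + (1-θ)ξ_α` and `η = (1-θ)η_α` span a two-dimensional Lie triple
system with `a ≠ 0`, `ξ_α, η_α ∈ g_α` orthogonal and `η_α ≠ 0`.  If `ad(ξ)²η` is
proportional to `η` and both `[ξ,η]` and `[η,[η,ξ]]` are orthogonal to `g_{2α}`,
then `[ξ_α, η_α] = 0`. -/
theorem bracket_xi_eta_eq_zero
    (L : Type*) [LieRing L] [LieAlgebra ℝ L] [FiniteDimensional ℝ L]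
    [LieAlgebra.IsSemisimple ℝ L]
    (θ : L →ₗ⁅ℝ⁆ L) (hθ : Function.Involutive θ)
    (hpos : ∀ X : L, X ≠ 0 → 0 < cip L θ X X)
    (a : Submodule ℝ L)
    (hap : ∀ H ∈ a, θ H = -H)
    (habelian : ∀ H ∈ a, ∀ H' ∈ a, ⁅H, H'⁆ = 0)
    (αl : L →ₗ[ℝ] ℝ) (Hα : L) (hHα : Hα ∈ a)
    (hdualα : ∀ H ∈ a, cip L θ Hα H = αl H)
    (hαsq : 0 < cip L θ Hα Hα)
    -- the root space `g_{2α}`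
    (g2 : Submodule ℝ L)
    (hg2 : ∀ X : L, X ∈ g2 ↔ ∀ H ∈ a, ⁅H, X⁆ = (2 * αl H) • X)
    (aa : ℝ) (haa : aa ≠ 0)
    (ξα ηα : L) (hηα0 : ηα ≠ 0)
    (hξroot : ∀ H ∈ a, ⁅H, ξα⁆ = αl H • ξα)
    (hηroot : ∀ H ∈ a, ⁅H, ηα⁆ = αl H • ηα)
    (horth : cip L θ ξα ηα = 0)
    -- the identity `(1-θ)[θX,Y] = 2⟨X,Y⟩H_α` specialised:
    (hdξ : ⁅θ ξα, ξα⁆ = cip L θ ξα ξα • Hα)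
    (hdη : ⁅θ ηα, ηα⁆ = cip L θ ηα ηα • Hα)
    (hmix : θ ⁅θ ξα, ηα⁆ = ⁅θ ξα, ηα⁆)
    (hbr2 : ⁅ξα, ηα⁆ ∈ g2)
    -- `ad` adjointness: `⟨[X,Y],Z⟩ = -⟨Y,[θX,Z]⟩`
    (hadj : ∀ X Y Z : L, cip L θ ⁅X, Y⁆ Z = -(cip L θ Y ⁅θ X, Z⁆))
    -- the two vectors spanning the Lie triple system
    (ξv ηv : L)
    (hξv : ξv = aa • Hα + (ξα - θ ξα))
    (hηv : ηv = ηα - θ ηα)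
    -- `ad(ξ)²η` is proportional to `η` (constant curvature of the section)
    (hprop : ∃ C : ℝ, ⁅ξv, ⁅ξv, ηv⁆⁆ = C • ηv)
    -- `[ξ,η]` and `[η,[η,ξ]]` are orthogonal to `g_{2α}`
    (hperp1 : ∀ X ∈ g2, cip L θ ⁅ξv, ηv⁆ X = 0)
    (hperp2 : ∀ X ∈ g2, cip L θ ⁅ηv, ⁅ηv, ξv⁆⁆ X = 0) :
    ⁅ξα, ηα⁆ = 0 :=
  bracket_xi_eta_eq_zero_general L θ hθ hpos a hap αl Hα hHα hdualα hαsq aa haa ξα ηα hξroot hηroot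
    hadj ξv ηv hξv hηv hprop
end
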